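/- For every real x > 1 and every real a ≥ -1, the five-term dilogarithm identity holds: Li₂(-a/x) - Li₂(1/x) + π²/6 - Li₂(-a) - ln(x)·ln((x+a)/(x-1)) = -Li₂(-a·(x-1)/(x+a)) + Li₂((x-1)/(x+a)). -/

import Mathlib

/-!
For fixed `a > -1`, differentiate the difference of the two sides in `x` on `(1, ∞)`. By the chain
rule, each `Li₂(g x)` contributes `-log (1 - g x)` times the logarithmic derivative of `g`; the
four arguments are Möbius maps whose `1 - g x` factor into `x`, `x - 1`, `x + a`, `1 + a`, and the
logarithms cancel against the derivative of the product term. So the difference is constant, and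
letting `x → 1⁺` shows the constant is `π² / 6 - Li₂(1) = 0`, where `Li₂(1) = ζ(2)` comes from
integrating the power series of `-log (1 - t) / t` termwise. For `a = -1` both sides vanish
directly.
-/

open Real MeasureTheory

noncomputable def Li2 (x : ℝ) : ℝ := -∫ t in (0:ℝ)..x, Real.log (1 - t) / t

open Set Filter Topology intervalIntegral

theorem hasSum_one_div_succ_sq :
    HasSum (fun n : ℕ => 1 / ((n : ℝ) + 1) ^ 2) (π ^ 2 / 6) := by
  simpa using (hasSum_nat_add_iff' 1).mpr hasSum_zeta_two

theorem hasSum_Li2 {z : ℝ} (h0 : 0 ≤ z) (h1 : z ≤ 1) :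
    HasSum (fun n : ℕ => z ^ (n + 1) / ((n : ℝ) + 1) ^ 2) (Li2 z) := by
  have hterm (n : ℕ) :
      ∫ t in Ioc 0 z, t ^ n / ((n : ℝ) + 1) = z ^ (n + 1) / ((n : ℝ) + 1) ^ 2 := by
    rw [← integral_of_le h0, intervalIntegral.integral_div, integral_pow]
    field_simp
    simp
  have hnorm (n : ℕ) :
      ∫ t in Ioc 0 z, ‖t ^ n / ((n : ℝ) + 1)‖ = z ^ (n + 1) / ((n : ℝ) + 1) ^ 2 := by
    rw [← hterm]
    refine setIntegral_congr_fun measurableSet_Ioc fun t ht => ?_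
    exact norm_of_nonneg (by have := ht.1.le; positivity)
  have hsum : Summable fun n : ℕ => z ^ (n + 1) / ((n : ℝ) + 1) ^ 2 := by
    refine hasSum_one_div_succ_sq.summable.of_nonneg_of_le (fun n => by positivity) fun n => ?_
    gcongr
    exact pow_le_one₀ h0 h1
  have htermwise := hasSum_integral_of_summable_integral_norm
    (μ := volume.restrict (Ioc 0 z)) (F := fun (n : ℕ) (t : ℝ) => t ^ n / ((n : ℝ) + 1))
    (fun n => ((continuous_pow n).div_const _).integrableOn_Ioc) (by simpa only [hnorm] using hsum)
  simp only [hterm] at htermwise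
  have hLi2 : Li2 z = ∫ t in Ioc 0 z, ∑' n : ℕ, t ^ n / ((n : ℝ) + 1) := by
    rw [Li2, ← intervalIntegral.integral_neg, integral_of_le h0]
    refine setIntegral_congr_ae measurableSet_Ioc ?_
    filter_upwards [Measure.ae_ne volume 1] with t ht1 ht
    have habs : |t| < 1 := abs_lt.2 ⟨by linarith [ht.1], lt_of_le_of_ne (ht.2.trans h1) ht1⟩
    rw [← neg_div]
    refine (((hasSum_pow_div_log_of_abs_lt_one habs).div_const t).congr_fun
      fun n => ?_).tsum_eq.symm
    field_simp [ht.1.ne']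
    ring
  rwa [hLi2]

theorem continuousOn_Li2 : ContinuousOn Li2 (Icc 0 1) := by
  have h : ContinuousOn (fun z : ℝ => ∑' n : ℕ, z ^ (n + 1) / ((n : ℝ) + 1) ^ 2) (Icc 0 1) := by
    refine continuousOn_tsum (fun n => ((continuous_pow _).div_const _).continuousOn)
      hasSum_one_div_succ_sq.summable fun n z hz => ?_
    rw [norm_div, norm_pow, norm_of_nonneg hz.1, norm_of_nonneg (by positivity)]
    gcongr
    exact pow_le_one₀ hz.1 hz.2
  exact h.congr fun z hz => (hasSum_Li2 hz.1 hz.2).tsum_eq.symm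

theorem Li2_one : Li2 1 = π ^ 2 / 6 :=
  (hasSum_Li2 zero_le_one le_rfl).unique (by simpa using hasSum_one_div_succ_sq)

theorem Li2_zero : Li2 0 = 0 := by
  simp [Li2]

/-- `-log (1 - t) / t` with its removable singularity at `t = 0` filled in by the value `1`
(the integrand in `Li2` takes the junk value `0` there). -/
noncomputable def li2Integrand : ℝ → ℝ := dslope (fun t => -Real.log (1 - t)) 0

theorem li2Integrand_mul_self (z : ℝ) : li2Integrand z * z = -Real.log (1 - z) := by
  rcases eq_or_ne z 0 with rfl | hz
  · simp
  · rw [li2Integrand, dslope_of_ne _ hz, slope_def_field]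
    field_simp
    simp [mul_comm]

theorem continuousAt_li2Integrand {z : ℝ} (hz : z < 1) : ContinuousAt li2Integrand z := by
  have hd : DifferentiableAt ℝ (fun t => -Real.log (1 - t)) z := by
    fun_prop (disch := linarith)
  rcases eq_or_ne z 0 with rfl | h0
  · exact continuousAt_dslope_same.2 hd
  · exact (continuousAt_dslope_of_ne h0).2 hd.continuousAt

theorem Li2_eq_integral_li2Integrand (z : ℝ) : Li2 z = ∫ t in 0..z, li2Integrand t := by
  rw [Li2, ← intervalIntegral.integral_neg]
  refine integral_congr_ae ?_
  filter_upwards [Measure.ae_ne volume 0] with t ht _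
  rw [← neg_div, div_eq_iff ht, li2Integrand_mul_self]

theorem hasDerivAt_Li2 {z : ℝ} (hz : z < 1) : HasDerivAt Li2 (li2Integrand z) z := by
  have hcont : ContinuousOn li2Integrand (Iio 1) :=
    fun t ht => (continuousAt_li2Integrand ht).continuousWithinAt
  rw [funext Li2_eq_integral_li2Integrand]
  refine integral_hasDerivAt_right ?_ (hcont.stronglyMeasurableAtFilter isOpen_Iio z hz)
    (continuousAt_li2Integrand hz)
  exact (hcont.mono fun t ht => ht.2.trans_lt (max_lt one_pos hz)).intervalIntegrable

/-- The derivative of `g` is given as `g y * r` so that nothing is divided by `g y`, which may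
vanish. -/
theorem HasDerivAt.Li2_comp {g : ℝ → ℝ} {r y : ℝ} (hg : HasDerivAt g (g y * r) y)
    (hy : g y < 1) : HasDerivAt (fun t => Li2 (g t)) (-Real.log (1 - g y) * r) y := by
  refine ((hasDerivAt_Li2 hy).comp y hg).congr_deriv ?_
  rw [← mul_assoc, li2Integrand_mul_self]

theorem hasDerivAt_const_div {y : ℝ} (c : ℝ) (hy : y ≠ 0) :
    HasDerivAt (fun t => c / t) (c / y * -y⁻¹) y :=
  ((hasDerivAt_const y c).div (hasDerivAt_id' y) hy).congr_deriv (by field_simp; ring)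

theorem hasDerivAt_mul_sub_one_div_add {a y : ℝ} (c : ℝ) (hy : y ≠ 1) (hya : y + a ≠ 0) :
    HasDerivAt (fun t => c * (t - 1) / (t + a))
      (c * (y - 1) / (y + a) * ((y - 1)⁻¹ - (y + a)⁻¹)) y := by
  have hy1 : y - 1 ≠ 0 := sub_ne_zero.2 hy
  refine ((((hasDerivAt_id' y).sub_const 1).const_mul c).div ((hasDerivAt_id' y).add_const a)
    hya).congr_deriv ?_
  field_simp

noncomputable def fiveTermDefect (a t : ℝ) : ℝ :=
  Li2 (-a / t) - Li2 (1 / t) + π ^ 2 / 6 - Li2 (-a)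
    - Real.log t * (Real.log (t + a) - Real.log (t - 1))
    + Li2 (-a * (t - 1) / (t + a)) - Li2 ((t - 1) / (t + a))

theorem hasDerivAt_fiveTermDefect {a y : ℝ} (ha : -1 < a) (hy : 1 < y) :
    HasDerivAt (fiveTermDefect a) 0 y := by
  have hy0 : 0 < y := by linarith
  have hy1 : 0 < y - 1 := by linarith
  have hya : 0 < y + a := by linarith
  have h1a : 0 < 1 + a := by linarith
  have hprod : HasDerivAt (fun t => Real.log t * (Real.log (t + a) - Real.log (t - 1)))
      (y⁻¹ * (Real.log (y + a) - Real.log (y - 1)) + Real.log y * (1 / (y + a) - 1 / (y - 1))) y :=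
    (Real.hasDerivAt_log hy0.ne').mul ((((hasDerivAt_id' y).add_const a).log hya.ne').sub
      (((hasDerivAt_id' y).sub_const 1).log hy1.ne'))
  have hmob : HasDerivAt (fun t => (t - 1) / (t + a))
      ((y - 1) / (y + a) * ((y - 1)⁻¹ - (y + a)⁻¹)) y := by
    simpa using hasDerivAt_mul_sub_one_div_add 1 hy.ne' hya.ne'
  have hz1 : -a / y < 1 := by rw [div_lt_one hy0]; linarith
  have hz2 : 1 / y < 1 := by rw [div_lt_one hy0]; linarith
  have hz3 : -a * (y - 1) / (y + a) < 1 := by rw [div_lt_one hya]; nlinarith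
  have hz4 : (y - 1) / (y + a) < 1 := by rw [div_lt_one hya]; linarith
  have hsum := (((((((hasDerivAt_const_div (-a) hy0.ne').Li2_comp hz1).sub
      ((hasDerivAt_const_div 1 hy0.ne').Li2_comp hz2)).add_const (π ^ 2 / 6)).sub_const
      (Li2 (-a))).sub hprod).add
      ((hasDerivAt_mul_sub_one_div_add (-a) hy.ne' hya.ne').Li2_comp hz3)).sub
    (hmob.Li2_comp hz4)
  refine hsum.congr_deriv ?_
  have hl1 : Real.log (1 - -a / y) = Real.log (y + a) - Real.log y := by
    rw [← Real.log_div hya.ne' hy0.ne']; congr 1; field_simp; ring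
  have hl2 : Real.log (1 - 1 / y) = Real.log (y - 1) - Real.log y := by
    rw [← Real.log_div hy1.ne' hy0.ne']; congr 1; field_simp
  have hl3 : Real.log (1 - -a * (y - 1) / (y + a))
      = Real.log y + Real.log (1 + a) - Real.log (y + a) := by
    rw [← Real.log_mul hy0.ne' h1a.ne', ← Real.log_div (by positivity) hya.ne']
    congr 1; field_simp; ring
  have hl4 : Real.log (1 - (y - 1) / (y + a)) = Real.log (1 + a) - Real.log (y + a) := by
    rw [← Real.log_div h1a.ne' hya.ne']; congr 1; field_simp; ring
  rw [hl1, hl2, hl3, hl4]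
  ring

theorem tendsto_log_mul_log_sub_one :
    Tendsto (fun t => Real.log t * Real.log (t - 1)) (𝓝[>] 1) (𝓝 0) := by
  have hlim : Tendsto (fun t => (t - 1) * Real.log (t - 1)) (𝓝[>] 1) (𝓝 0) := by
    have := (continuous_mul_log.comp (continuous_sub_right (1 : ℝ))).tendsto 1
    simpa [Function.comp_def] using this.mono_left nhdsWithin_le_nhds
  refine squeeze_zero_norm' ?_ (by simpa using hlim.norm)
  filter_upwards [self_mem_nhdsWithin] with t (ht : 1 < t)
  have hlog : 0 ≤ Real.log t := Real.log_nonneg ht.le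
  rw [norm_mul, norm_of_nonneg hlog, norm_eq_abs, abs_of_pos (by linarith : 0 < t - 1)]
  gcongr
  exact Real.log_le_sub_one_of_pos (by linarith)

theorem tendsto_fiveTermDefect {a : ℝ} (ha : -1 < a) :
    Tendsto (fiveTermDefect a) (𝓝[>] 1) (𝓝 0) := by
  have h1a : 1 + a ≠ 0 := by linarith
  have hLi2 {z : ℝ} (hz : z < 1) : ContinuousAt Li2 z := (hasDerivAt_Li2 hz).continuousAt
  have c1 : ContinuousAt (fun t => Li2 (-a / t)) 1 :=
    (hLi2 (z := -a) (by linarith)).comp_of_eq (by fun_prop (disch := norm_num)) (by simp)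
  have c2 : ContinuousWithinAt (fun t : ℝ => Li2 (1 / t)) (Ioi 1) 1 := by
    refine (continuousOn_Li2 1 ⟨zero_le_one, le_rfl⟩).comp_of_eq
      (by fun_prop (disch := norm_num)) (fun t (ht : 1 < t) => ⟨by positivity, ?_⟩) (by simp)
    rw [div_le_one (by linarith)]
    exact ht.le
  have c3 : ContinuousAt (fun t => Real.log t * Real.log (t + a)) 1 := by
    fun_prop (disch := linarith)
  have c4 : ContinuousAt (fun t => Li2 (-a * (t - 1) / (t + a))) 1 :=
    (hLi2 one_pos).comp_of_eq (by fun_prop (disch := exact h1a)) (by simp)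
  have c5 : ContinuousAt (fun t => Li2 ((t - 1) / (t + a))) 1 :=
    (hLi2 one_pos).comp_of_eq (by fun_prop (disch := exact h1a)) (by simp)
  have hrest : ContinuousWithinAt (fun t => Li2 (-a / t) - Li2 (1 / t) + π ^ 2 / 6 - Li2 (-a)
      - Real.log t * Real.log (t + a) + Li2 (-a * (t - 1) / (t + a)) - Li2 ((t - 1) / (t + a)))
      (Ioi 1) 1 := ((((c1.continuousWithinAt.sub c2).add continuousWithinAt_const).sub
    continuousWithinAt_const).sub c3.continuousWithinAt |>.add c4.continuousWithinAt).sub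
    c5.continuousWithinAt
  convert hrest.tendsto.add tendsto_log_mul_log_sub_one using 2
  · rw [fiveTermDefect]
    ring
  · simp [Li2_one, Li2_zero]

theorem fiveTermDefect_eq_zero {a x : ℝ} (ha : -1 < a) (hx : 1 < x) : fiveTermDefect a x = 0 := by
  have hconst : ∀ y ∈ Ioi (1 : ℝ), fiveTermDefect a y = fiveTermDefect a x := fun y hy =>
    isOpen_Ioi.is_const_of_deriv_eq_zero isPreconnected_Ioi
      (fun t ht => (hasDerivAt_fiveTermDefect ha ht).differentiableAt.differentiableWithinAt)
      (fun t ht => (hasDerivAt_fiveTermDefect ha ht).deriv) hy hx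
  refine tendsto_nhds_unique ?_ (tendsto_fiveTermDefect ha)
  exact tendsto_const_nhds.congr' (eventually_nhdsWithin_of_forall fun y hy => (hconst y hy).symm)

theorem five_term_gemini (x a : ℝ) (hx : 1 < x) (ha : -1 ≤ a) :
    Li2 (-a / x) - Li2 (1 / x) + Real.pi ^ 2 / 6 - Li2 (-a)
      - Real.log x * Real.log ((x + a) / (x - 1))
      = -Li2 (-a * (x - 1) / (x + a)) + Li2 ((x - 1) / (x + a)) := by
  rcases ha.eq_or_lt with rfl | ha
  · have hx1 : x + -1 = x - 1 := by ring
    simp [hx1, div_self (by linarith : x - 1 ≠ 0), Li2_one]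
  · have h := fiveTermDefect_eq_zero ha hx
    rw [fiveTermDefect] at h
    rw [Real.log_div (by linarith) (by linarith)]
    linarith
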